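/- arXiv:1205.1334 — 2 statements merged into one kernel-verified Lean document; each statement's English description precedes it below -/
import Mathlib

section
/- Let G be a randomly 3-dimensional graph. Then every vertex of G has degree at most 3. -/
/-- `S` is a resolving set of `G`: every pair of distinct vertices is resolved
by some vertex of `S`, i.e. some `u ∈ S` has different distances to the two vertices. -/
def IsResolvingSet {V : Type*} (G : SimpleGraph V) (S : Set V) : Prop :=
  ∀ x y : V, x ≠ y → ∃ u ∈ S, G.dist u x ≠ G.dist u y

/-- The metric dimension of `G`: minimum size of a resolving set. -/
noncomputable def metricDim {V : Type*} [Fintype V] (G : SimpleGraph V) : ℕ :=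
  sInf {k | ∃ S : Finset V, S.card = k ∧ IsResolvingSet G ↑S}

/-- The upper dimension of `G`: maximum size of a minimal resolving set. -/
noncomputable def upperDim {V : Type*} [Fintype V] (G : SimpleGraph V) : ℕ :=
  sSup {k | ∃ S : Finset V, S.card = k ∧ IsResolvingSet G ↑S ∧
    ∀ T : Finset V, T ⊂ S → ¬ IsResolvingSet G ↑T}

/-- The resolving number of `G`: minimum `k` such that every `k`-subset of
the vertex set is a resolving set. -/
noncomputable def resolvingNumber {V : Type*} [Fintype V] (G : SimpleGraph V) : ℕ :=
  sInf {k | ∀ S : Finset V, S.card = k → IsResolvingSet G ↑S}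


/-!
If every three vertices resolve `G`, then no pair `x ≠ y` has three vertices equidistant from it.
Two neighbours `p, q` of `u` are equidistant from `u` and from every other neighbour adjacent to
both or to neither of them, so among four neighbours of `u` no two are twins, and the four induce
a path `x₁ x₂ x₃ x₄`. Every vertex outside this fan is, like `u`, equidistant from `x₂` and `x₃`,
so there is at most one such vertex `w`, and the remaining pairs force its distances to the fan.
Then `{x₁, x₂}` or `{x₁, w}` resolves `G`, so `dim G ≤ 2`.
-/

open Finset SimpleGraph

section

variable {V : Type*} {G : SimpleGraph V}

lemma isResolvingSet_of_card_eq_resolvingNumber [Fintype V] {S : Finset V}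
    (hS : #S = resolvingNumber G) : IsResolvingSet G S := by
  have hne : {k | ∀ S : Finset V, #S = k → IsResolvingSet G S}.Nonempty :=
    ⟨Fintype.card V + 1, fun S hS ↦ by have := S.card_le_univ; omega⟩
  exact Nat.sInf_mem hne S hS

lemma not_isResolvingSet_of_card_lt_metricDim [Fintype V] {S : Finset V}
    (hS : #S < metricDim G) : ¬ IsResolvingSet G S := by
  unfold metricDim at hS
  exact fun hres ↦ hS.not_ge (Nat.sInf_le ⟨S, rfl, hres⟩)

lemma not_nodup_map_dist_pair [Fintype V] (hdim : 2 < metricDim G) (a b : V) {l : List V}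
    (hl : ∀ v, v ∈ l) : ¬ (l.map fun v ↦ (G.dist a v, G.dist b v)).Nodup := by
  classical
  refine fun hnd ↦ not_isResolvingSet_of_card_lt_metricDim
    ((card_le_two (a := a) (b := b)).trans_lt hdim) fun x y hxy ↦ ?_
  by_contra! h
  simp only [coe_insert, coe_singleton, Set.mem_insert_iff, Set.mem_singleton_iff,
    forall_eq_or_imp, forall_eq] at h
  exact hxy (List.inj_on_of_nodup_map hnd (hl x) (hl y) (Prod.ext h.1 h.2))

lemma dist_ne_of_forall_card_eq_three (h3 : ∀ S : Finset V, #S = 3 → IsResolvingSet G S)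
    {a b c x y : V} (hab : a ≠ b) (hac : a ≠ c) (hbc : b ≠ c) (hxy : x ≠ y)
    (ha : G.dist a x = G.dist a y) (hb : G.dist b x = G.dist b y) :
    G.dist c x ≠ G.dist c y := by
  classical
  intro hc
  obtain ⟨z, hz, hne⟩ := h3 {a, b, c} (card_eq_three.mpr ⟨a, b, c, hab, hac, hbc, rfl⟩) x y hxy
  simp only [coe_insert, coe_singleton, Set.mem_insert_iff, Set.mem_singleton_iff] at hz
  rcases hz with rfl | rfl | rfl <;> contradiction

lemma dist_eq_two_of_adj_of_adj {a b c : V} (hab : G.Adj a b) (hbc : G.Adj b c) (hac : a ≠ c)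
    (h : ¬ G.Adj a c) : G.dist a c = 2 := by
  have hle : G.dist a c ≤ 2 := (dist_le (hab.toWalk.append hbc.toWalk)).trans_eq (by simp)
  have h0 : G.dist a c ≠ 0 := by
    rw [ne_eq, (hab.reachable.trans hbc.reachable).dist_eq_zero_iff]; exact hac
  have h1 : G.dist a c ≠ 1 := by rwa [ne_eq, dist_eq_one_iff_adj]
  omega

lemma dist_eq_dist_of_adj_iff_adj {u c p q : V} (hc : G.Adj u c) (hp : G.Adj u p)
    (hq : G.Adj u q) (hcp : c ≠ p) (hcq : c ≠ q) (h : G.Adj c p ↔ G.Adj c q) :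
    G.dist c p = G.dist c q := by
  by_cases hadj : G.Adj c p
  · rw [dist_eq_one_iff_adj.mpr hadj, dist_eq_one_iff_adj.mpr (h.mp hadj)]
  · rw [dist_eq_two_of_adj_of_adj hc.symm hp hcp hadj,
      dist_eq_two_of_adj_of_adj hc.symm hq hcq (h.not.mp hadj)]

lemma not_adj_iff_adj_and_adj_iff_adj (h3 : ∀ S : Finset V, #S = 3 → IsResolvingSet G S)
    {u p q c c' : V} (hp : G.Adj u p) (hq : G.Adj u q) (hc : G.Adj u c) (hc' : G.Adj u c')
    (hpq : p ≠ q) (hcp : c ≠ p) (hcq : c ≠ q) (hc'p : c' ≠ p) (hc'q : c' ≠ q) (hcc' : c ≠ c') :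
    ¬ ((G.Adj c p ↔ G.Adj c q) ∧ (G.Adj c' p ↔ G.Adj c' q)) := fun ⟨h, h'⟩ ↦
  dist_ne_of_forall_card_eq_three h3 hc.ne hc'.ne hcc' hpq
    (by rw [dist_eq_one_iff_adj.mpr hp, dist_eq_one_iff_adj.mpr hq])
    (dist_eq_dist_of_adj_iff_adj hc hp hq hcp hcq h)
    (dist_eq_dist_of_adj_iff_adj hc' hp hq hc'p hc'q h')

structure IsFan (G : SimpleGraph V) (u x₁ x₂ x₃ x₄ : V) : Prop where
  adj₁ : G.Adj u x₁
  adj₂ : G.Adj u x₂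
  adj₃ : G.Adj u x₃
  adj₄ : G.Adj u x₄
  adj₁₂ : G.Adj x₁ x₂
  adj₂₃ : G.Adj x₂ x₃
  adj₃₄ : G.Adj x₃ x₄
  not_adj₁₃ : ¬ G.Adj x₁ x₃
  not_adj₁₄ : ¬ G.Adj x₁ x₄
  not_adj₂₄ : ¬ G.Adj x₂ x₄

lemma isFan_iff {u x₁ x₂ x₃ x₄ : V} : IsFan G u x₁ x₂ x₃ x₄ ↔
    G.Adj u x₁ ∧ G.Adj u x₂ ∧ G.Adj u x₃ ∧ G.Adj u x₄ ∧ G.Adj x₁ x₂ ∧ G.Adj x₂ x₃ ∧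
      G.Adj x₃ x₄ ∧ ¬ G.Adj x₁ x₃ ∧ ¬ G.Adj x₁ x₄ ∧ ¬ G.Adj x₂ x₄ :=
  ⟨fun ⟨h₁, h₂, h₃, h₄, h₁₂, h₂₃, h₃₄, h₁₃, h₁₄, h₂₄⟩ ↦
    ⟨h₁, h₂, h₃, h₄, h₁₂, h₂₃, h₃₄, h₁₃, h₁₄, h₂₄⟩,
   fun ⟨h₁, h₂, h₃, h₄, h₁₂, h₂₃, h₃₄, h₁₃, h₁₄, h₂₄⟩ ↦
    ⟨h₁, h₂, h₃, h₄, h₁₂, h₂₃, h₃₄, h₁₃, h₁₄, h₂₄⟩⟩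

lemma exists_isFan (h3 : ∀ S : Finset V, #S = 3 → IsResolvingSet G S) {u : V} {T : Finset V}
    (hT : ∀ v ∈ T, G.Adj u v) (hcard : #T = 4) : ∃ x₁ x₂ x₃ x₄, IsFan G u x₁ x₂ x₃ x₄ := by
  classical
  obtain ⟨v₁, v₂, v₃, v₄, h₁₂, h₁₃, h₁₄, h₂₃, h₂₄, h₃₄, rfl⟩ := card_eq_four.mp hcard
  have hv₁ := hT v₁ (by simp)
  have hv₂ := hT v₂ (by simp)
  have hv₃ := hT v₃ (by simp)
  have hv₄ := hT v₄ (by simp)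
  have s₁₂ := not_adj_iff_adj_and_adj_iff_adj h3 hv₁ hv₂ hv₃ hv₄ h₁₂ h₁₃.symm h₂₃.symm
    h₁₄.symm h₂₄.symm h₃₄
  have s₁₃ := not_adj_iff_adj_and_adj_iff_adj h3 hv₁ hv₃ hv₂ hv₄ h₁₃ h₁₂.symm h₂₃
    h₁₄.symm h₃₄.symm h₂₄
  have s₁₄ := not_adj_iff_adj_and_adj_iff_adj h3 hv₁ hv₄ hv₂ hv₃ h₁₄ h₁₂.symm h₂₄
    h₁₃.symm h₃₄ h₂₃
  have s₂₃ := not_adj_iff_adj_and_adj_iff_adj h3 hv₂ hv₃ hv₁ hv₄ h₂₃ h₁₂ h₁₃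
    h₂₄.symm h₃₄.symm h₁₄
  have s₂₄ := not_adj_iff_adj_and_adj_iff_adj h3 hv₂ hv₄ hv₁ hv₃ h₂₄ h₁₂ h₁₄
    h₂₃.symm h₃₄ h₁₃
  have s₃₄ := not_adj_iff_adj_and_adj_iff_adj h3 hv₃ hv₄ hv₁ hv₂ h₃₄ h₁₃ h₁₄ h₂₃ h₂₄ h₁₂
  -- the path is the only twin-free graph on four vertices
  have : IsFan G u v₁ v₂ v₃ v₄ ∨ IsFan G u v₁ v₂ v₄ v₃ ∨ IsFan G u v₁ v₃ v₂ v₄ ∨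
      IsFan G u v₁ v₃ v₄ v₂ ∨ IsFan G u v₁ v₄ v₂ v₃ ∨ IsFan G u v₁ v₄ v₃ v₂ ∨
      IsFan G u v₂ v₁ v₃ v₄ ∨ IsFan G u v₂ v₁ v₄ v₃ ∨ IsFan G u v₃ v₁ v₂ v₄ ∨
      IsFan G u v₃ v₂ v₁ v₄ ∨ IsFan G u v₂ v₃ v₁ v₄ ∨ IsFan G u v₂ v₄ v₁ v₃ := by
    simp only [isFan_iff, hv₁, hv₂, hv₃, hv₄, true_and]
    by_cases a₁₂ : G.Adj v₁ v₂ <;> by_cases a₁₃ : G.Adj v₁ v₃ <;> by_cases a₁₄ : G.Adj v₁ v₄ <;>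
      by_cases a₂₃ : G.Adj v₂ v₃ <;> by_cases a₂₄ : G.Adj v₂ v₄ <;> by_cases a₃₄ : G.Adj v₃ v₄ <;>
      simp_all [G.adj_comm]
  rcases this with h | h | h | h | h | h | h | h | h | h | h | h <;> exact ⟨_, _, _, _, h⟩

namespace IsFan

variable {u x₁ x₂ x₃ x₄ w : V}

lemma symm (hF : IsFan G u x₁ x₂ x₃ x₄) : IsFan G u x₄ x₃ x₂ x₁ :=
  ⟨hF.adj₄, hF.adj₃, hF.adj₂, hF.adj₁, hF.adj₃₄.symm, hF.adj₂₃.symm, hF.adj₁₂.symm,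
    fun h ↦ hF.not_adj₂₄ h.symm, fun h ↦ hF.not_adj₁₄ h.symm, fun h ↦ hF.not_adj₁₃ h.symm⟩

lemma dist_eq (hF : IsFan G u x₁ x₂ x₃ x₄) :
    G.dist u x₁ = 1 ∧ G.dist u x₂ = 1 ∧ G.dist u x₃ = 1 ∧ G.dist u x₄ = 1 ∧
      G.dist x₁ x₂ = 1 ∧ G.dist x₂ x₃ = 1 ∧ G.dist x₃ x₄ = 1 ∧
      G.dist x₁ x₃ = 2 ∧ G.dist x₁ x₄ = 2 ∧ G.dist x₂ x₄ = 2 := by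
  have ne₁₃ : x₁ ≠ x₃ := by rintro rfl; exact hF.not_adj₁₄ hF.adj₃₄
  have ne₁₄ : x₁ ≠ x₄ := by rintro rfl; exact hF.not_adj₁₃ hF.adj₃₄.symm
  have ne₂₄ : x₂ ≠ x₄ := by rintro rfl; exact hF.not_adj₁₄ hF.adj₁₂
  simp only [dist_eq_one_iff_adj, hF.adj₁, hF.adj₂, hF.adj₃, hF.adj₄, hF.adj₁₂, hF.adj₂₃,
    hF.adj₃₄, true_and]
  exact ⟨dist_eq_two_of_adj_of_adj hF.adj₁₂ hF.adj₂₃ ne₁₃ hF.not_adj₁₃,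
    dist_eq_two_of_adj_of_adj hF.adj₁.symm hF.adj₄ ne₁₄ hF.not_adj₁₄,
    dist_eq_two_of_adj_of_adj hF.adj₂₃ hF.adj₃₄ ne₂₄ hF.not_adj₂₄⟩

lemma dist_ne_of_notMem (h3 : ∀ S : Finset V, #S = 3 → IsResolvingSet G S)
    (hF : IsFan G u x₁ x₂ x₃ x₄) (hw : w ∉ ({u, x₁, x₂, x₃, x₄} : Set V)) :
    G.dist w x₁ ≠ G.dist w x₂ ∧ G.dist w u ≠ G.dist w x₂ := by
  obtain ⟨d₁, d₂, d₃, -, d₁₂, d₂₃, -, d₁₃, d₁₄, d₂₄⟩ := hF.dist_eq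
  simp only [Set.mem_insert_iff, Set.mem_singleton_iff, not_or] at hw
  obtain ⟨hwu, hw₁, -, hw₃, hw₄⟩ := hw
  -- `u, x₄` are equidistant from `x₁, x₂`, and `x₁, x₃` from `u, x₂`
  refine ⟨dist_ne_of_forall_card_eq_three h3 hF.adj₄.ne (Ne.symm hwu) (Ne.symm hw₄)
    hF.adj₁₂.ne (by rw [d₁, d₂]) ?_,
    dist_ne_of_forall_card_eq_three h3 ?_ (Ne.symm hw₁) (Ne.symm hw₃) hF.adj₂.ne ?_ ?_⟩
  · rw [dist_comm, d₁₄, dist_comm, d₂₄]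
  · rintro rfl; simp at d₁₃
  · rw [dist_comm, d₁, d₁₂]
  · rw [dist_comm, d₃, dist_comm, d₂₃]

lemma dist_eq_dist_of_notMem (h3 : ∀ S : Finset V, #S = 3 → IsResolvingSet G S)
    (hF : IsFan G u x₁ x₂ x₃ x₄) (hw : w ∉ ({u, x₁, x₂, x₃, x₄} : Set V)) :
    G.dist w x₂ = G.dist w x₃ := by
  have hwu₂ := (hF.dist_ne_of_notMem h3 hw).2
  have hwu₃ := (hF.symm.dist_ne_of_notMem h3 (by simpa [or_comm, or_left_comm] using hw)).2
  have := hF.adj₂.diff_dist_adj (u := w)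
  have := hF.adj₃.diff_dist_adj (u := w)
  have := hF.adj₂₃.diff_dist_adj (u := w)
  omega

lemma eq_of_notMem_of_notMem (h3 : ∀ S : Finset V, #S = 3 → IsResolvingSet G S)
    (hF : IsFan G u x₁ x₂ x₃ x₄) {v : V} (hv : v ∉ ({u, x₁, x₂, x₃, x₄} : Set V))
    (hw : w ∉ ({u, x₁, x₂, x₃, x₄} : Set V)) : v = w := by
  by_contra hvw
  have hu : ∀ {y}, y ∉ ({u, x₁, x₂, x₃, x₄} : Set V) → u ≠ y := by
    rintro y hy rfl; simp at hy
  exact dist_ne_of_forall_card_eq_three h3 (hu hv) (hu hw) hvw hF.adj₂₃.ne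
    (by rw [dist_eq_one_iff_adj.mpr hF.adj₂, dist_eq_one_iff_adj.mpr hF.adj₃])
    (hF.dist_eq_dist_of_notMem h3 hv) (hF.dist_eq_dist_of_notMem h3 hw)

lemma dist_eq_of_notMem_of_adj (hconn : G.Connected)
    (h3 : ∀ S : Finset V, #S = 3 → IsResolvingSet G S) (hF : IsFan G u x₁ x₂ x₃ x₄)
    (hw : w ∉ ({u, x₁, x₂, x₃, x₄} : Set V)) {z : V} (hz : z ∈ ({u, x₁, x₂, x₃, x₄} : Set V))
    (hwz : G.Adj w z) :
    (G.dist w u = 1 ∧ G.dist w x₁ = 1 ∧ G.dist w x₂ = 2 ∧ G.dist w x₃ = 2 ∧ G.dist w x₄ = 1) ∨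
      (G.dist w u = 2 ∧ G.dist w x₁ = 2 ∧ G.dist w x₂ = 1 ∧ G.dist w x₃ = 1 ∧
        G.dist w x₄ = 2) := by
  have hw' : w ∉ ({u, x₄, x₃, x₂, x₁} : Set V) := by simpa [or_comm, or_left_comm] using hw
  obtain ⟨hne₁₂, hneu₂⟩ := hF.dist_ne_of_notMem h3 hw
  obtain ⟨hne₄₃, hneu₃⟩ := hF.symm.dist_ne_of_notMem h3 hw'
  have heq₂₃ := hF.dist_eq_dist_of_notMem h3 hw
  have := hF.adj₁.diff_dist_adj (u := w)
  have := hF.adj₂.diff_dist_adj (u := w)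
  have := hF.adj₃.diff_dist_adj (u := w)
  have := hF.adj₄.diff_dist_adj (u := w)
  have := hF.adj₁₂.diff_dist_adj (u := w)
  have := hF.adj₃₄.diff_dist_adj (u := w)
  have hpos : ∀ v ∈ ({u, x₁, x₂, x₃, x₄} : Set V), G.dist w v ≠ 0 := fun v hv ↦ by
    rw [ne_eq, hconn.dist_eq_zero_iff]; rintro rfl; exact hw hv
  simp only [Set.mem_insert_iff, Set.mem_singleton_iff, forall_eq_or_imp, forall_eq] at hpos hz
  have hwz := dist_eq_one_iff_adj.mpr hwz
  rcases hz with rfl | rfl | rfl | rfl | rfl <;> omega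

lemma metricDim_le_two [Fintype V] (hconn : G.Connected)
    (h3 : ∀ S : Finset V, #S = 3 → IsResolvingSet G S) (hF : IsFan G u x₁ x₂ x₃ x₄) :
    metricDim G ≤ 2 := by
  by_contra! hdim
  obtain ⟨d₁, d₂, -, -, d₁₂, d₂₃, -, d₁₃, d₁₄, d₂₄⟩ := hF.dist_eq
  rw [dist_comm] at d₁ d₂
  by_cases hall : ∀ v, v ∈ ({u, x₁, x₂, x₃, x₄} : Set V)
  · refine not_nodup_map_dist_pair hdim x₁ x₂ (l := [u, x₁, x₂, x₃, x₄]) (by simpa using hall) ?_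
    simp only [List.map_cons, List.map_nil, dist_self, d₁, d₂, dist_comm (u := x₂) (v := x₁),
      d₁₂, d₁₃, d₁₄, d₂₃, d₂₄]
    decide
  obtain ⟨w, hw⟩ := not_forall.mp hall
  have hV : ∀ v, v ∈ ({u, x₁, x₂, x₃, x₄} : Set V) ∨ v = w := fun v ↦
    or_iff_not_imp_left.mpr fun hv ↦ hF.eq_of_notMem_of_notMem h3 hv hw
  have hl : ∀ v, v ∈ [u, x₁, x₂, x₃, x₄, w] := by simpa [or_assoc] using hV
  have : Nontrivial V := ⟨⟨u, x₁, hF.adj₁.ne⟩⟩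
  obtain ⟨z, hwz⟩ := hconn.preconnected.exists_adj_of_nontrivial w
  rcases hF.dist_eq_of_notMem_of_adj hconn h3 hw ((hV z).resolve_right hwz.ne.symm) hwz with
    ⟨-, e₁, e₂, -, -⟩ | ⟨e, e₁, e₂, e₃, e₄⟩
  · refine not_nodup_map_dist_pair hdim x₁ x₂ hl ?_
    rw [dist_comm] at e₁ e₂
    simp only [List.map_cons, List.map_nil, dist_self, d₁, d₂, dist_comm (u := x₂) (v := x₁),
      d₁₂, d₁₃, d₁₄, d₂₃, d₂₄, e₁, e₂]
    decide
  · refine not_nodup_map_dist_pair hdim x₁ w hl ?_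
    simp only [List.map_cons, List.map_nil, dist_self, d₁, d₁₂, d₁₃, d₁₄, e, e₁, e₂, e₃, e₄,
      dist_comm (u := x₁) (v := w)]
    decide

end IsFan

end

theorem stmt3_general {V : Type*} [Fintype V] (G : SimpleGraph V)
    [DecidableRel G.Adj] (hconn : G.Connected)
    (hdim : metricDim G = 3) (hres : resolvingNumber G = 3) :
    ∀ u : V, G.degree u ≤ 3 := by
  have h3 : ∀ S : Finset V, #S = 3 → IsResolvingSet G S := fun S hS ↦
    isResolvingSet_of_card_eq_resolvingNumber (hS.trans hres.symm)
  intro u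
  by_contra! hdeg
  obtain ⟨T, hT, hcard⟩ := exists_subset_card_eq (s := G.neighborFinset u) (n := 4)
    (by rwa [card_neighborFinset_eq_degree])
  obtain ⟨_, _, _, _, hF⟩ :=
    exists_isFan h3 (fun v hv ↦ (G.mem_neighborFinset u v).mp (hT hv)) hcard
  have := hF.metricDim_le_two hconn h3
  omega

/-- in a randomly 3-dimensional graph, every vertex has degree at most 3. -/
theorem stmt3 {V : Type*} [Fintype V] [DecidableEq V] (G : SimpleGraph V)
    [DecidableRel G.Adj] (hconn : G.Connected)
    (hdim : metricDim G = 3) (hres : resolvingNumber G = 3) :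
    ∀ u : V, G.degree u ≤ 3 :=
  stmt3_general G hconn hdim hres
end

section
/- Let ℓ ≥ 2 and let S be a resolving set of the grid graph G_ℓ. Let {x,y} be an S-unique diagonal pair with associated vertex u such that d(x,y) = 2, and let {r,s} and {t,z} be two further S-unique diagonal pairs, the three pairs pairwise distinct, lying in the same row (respectively, the same column) as {x,y}, with associated vertices v and w respectively. If u ≠ v and u ≠ w, then v = w. -/
/-- The `a × b` grid graph on `Fin a × Fin b`: two vertices are adjacent iff they
differ by exactly 1 in one coordinate and agree in the other (i.e. their taxicab
distance is 1). -/
def gridGraph (a b : ℕ) : SimpleGraph (Fin a × Fin b) where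
  Adj x y := ((x.1 : ℕ) - y.1) + ((y.1 : ℕ) - x.1) + ((x.2 : ℕ) - y.2) + ((y.2 : ℕ) - x.2) = 1
  symm := ⟨by intro x y h; omega⟩
  loopless := ⟨by intro x h; omega⟩

/-! A point `p` resolves a diagonal pair `x, y = x + (1, -1)` iff exactly one of `p.1 ≤ x.1`,
`p.2 ≤ y.2` holds, since each coordinate contributes `±1` to `d(p, x) - d(p, y)`. For pairs in a
common row the second condition is shared and only the threshold `x.1` moves, so a point resolves
exactly one of two such pairs iff its first coordinate lies between their thresholds. As `u`
resolves `{x, y}` but neither other pair, both other thresholds lie on the same side of `x.1`;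
then `v` or `w`, whichever belongs to the threshold nearer to `x.1`, also resolves the other pair,
and uniqueness gives `v = w`. Columns are the same with the coordinates exchanged. -/

open SimpleGraph

theorem SimpleGraph.pathGraph_dist_le_length {n : ℕ} {u v : Fin n} (W : (pathGraph n).Walk u v) :
    Nat.dist u v ≤ W.length := by
  induction W with
  | nil => simp
  | cons hadj W ih =>
    rw [pathGraph_adj] at hadj
    rw [Walk.length_cons]
    unfold Nat.dist at *
    omega

theorem SimpleGraph.pathGraph_edist_le_dist {n : ℕ} (u v : Fin n) :
    (pathGraph n).edist u v ≤ Nat.dist u v := by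
  wlog huv : u ≤ v generalizing u v
  · rw [edist_comm, Nat.dist_comm]
    exact this v u (le_of_not_ge huv)
  obtain ⟨k, hk⟩ := Nat.exists_eq_add_of_le (Fin.le_iff_val_le_val.mp huv)
  rw [Nat.dist_eq_sub_of_le (Fin.le_iff_val_le_val.mp huv), hk, Nat.add_sub_cancel_left]
  induction k generalizing v with
  | zero => simp [Fin.ext hk]
  | succ k ih =>
    let v' : Fin n := ⟨u + k, by omega⟩
    have hadj : (pathGraph n).Adj v' v := pathGraph_adj.mpr (Or.inl (by simp [v', hk]; omega))
    calc (pathGraph n).edist u v ≤ (pathGraph n).edist u v' + (pathGraph n).edist v' v :=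
          SimpleGraph.edist_triangle
      _ ≤ k + 1 := by
          rw [edist_eq_one_iff_adj.mpr hadj]
          gcongr
          exact ih v' (Fin.le_iff_val_le_val.mpr (by simp [v'])) rfl

theorem SimpleGraph.pathGraph_edist {n : ℕ} (u v : Fin n) :
    (pathGraph n).edist u v = Nat.dist u v := by
  refine le_antisymm (pathGraph_edist_le_dist u v) ?_
  obtain ⟨W, hW⟩ := (pathGraph_preconnected n u v).exists_walk_length_eq_edist
  rw [← hW, Nat.cast_le]
  exact pathGraph_dist_le_length W

theorem gridGraph_eq_boxProd (a b : ℕ) : gridGraph a b = pathGraph a □ pathGraph b := by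
  ext p q
  simp only [gridGraph, boxProd_adj, pathGraph_adj, Fin.ext_iff]
  omega

theorem gridGraph_dist {a b : ℕ} (p q : Fin a × Fin b) :
    (gridGraph a b).dist p q = Nat.dist p.1 q.1 + Nat.dist p.2 q.2 := by
  rw [gridGraph_eq_boxProd, SimpleGraph.dist, edist_boxProd, pathGraph_edist, pathGraph_edist]
  norm_cast

theorem gridGraph_resolvers_eq_xor_of_diagonal {ℓ : ℕ} {x y : Fin ℓ × Fin ℓ}
    (hdiag : (x.1 : ℕ) + x.2 = y.1 + y.2) (hlt : (x.1 : ℕ) < y.1)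
    (hd : (gridGraph ℓ ℓ).dist x y = 2) :
    {p | (gridGraph ℓ ℓ).dist p x ≠ (gridGraph ℓ ℓ).dist p y} =
      {p | Xor (p.1 ≤ x.1) (p.2 ≤ y.2)} := by
  ext p
  rw [gridGraph_dist] at hd
  simp only [Set.mem_ofPred_eq, gridGraph_dist, Xor, Fin.le_iff_val_le_val]
  unfold Nat.dist at *
  omega

theorem eq_of_xor_le_inter_eq_singleton {V α : Type*} [LinearOrder α] {S : Set V}
    (f : V → α) (P : V → Prop) {a b c : α} {u v w : V}
    (hu : {p | Xor (f p ≤ a) (P p)} ∩ S = {u}) (hv : {p | Xor (f p ≤ b) (P p)} ∩ S = {v})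
    (hw : {p | Xor (f p ≤ c) (P p)} ∩ S = {w}) (huv : u ≠ v) (huw : u ≠ w) : v = w := by
  simp only [Set.eq_singleton_iff_unique_mem, Set.mem_inter_iff, Set.mem_ofPred_eq] at hu hv hw
  obtain ⟨⟨hua, huS⟩, hu⟩ := hu
  obtain ⟨⟨hvb, hvS⟩, hv⟩ := hv
  obtain ⟨⟨hwc, hwS⟩, hw⟩ := hw
  have hub : ¬Xor (f u ≤ b) (P u) := fun h ↦ huv (hv u ⟨h, huS⟩)
  have huc : ¬Xor (f u ≤ c) (P u) := fun h ↦ huw (hw u ⟨h, huS⟩)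
  have hva : ¬Xor (f v ≤ a) (P v) := fun h ↦ huv (hu v ⟨h, hvS⟩).symm
  have hwa : ¬Xor (f w ≤ a) (P w) := fun h ↦ huw (hu w ⟨h, hwS⟩).symm
  by_contra hvw
  have hvc : ¬Xor (f v ≤ c) (P v) := fun h ↦ hvw (hw v ⟨h, hvS⟩)
  have hwb : ¬Xor (f w ≤ b) (P w) := fun h ↦ hvw (hv w ⟨h, hwS⟩).symm
  -- `f u` lies between `a` and `b` and between `a` and `c`, `f v` between `a` and `b` and
  -- between `b` and `c`, `f w` between `a` and `c` and between `b` and `c`: impossible.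
  grind

theorem stmt12_general (ℓ : ℕ) (S : Set (Fin ℓ × Fin ℓ))
    (x y r s t z u v w : Fin ℓ × Fin ℓ)
    -- the three diagonal pairs, each written with its smaller element first
    (hdiag₁ : (x.1 : ℕ) + (x.2 : ℕ) = (y.1 : ℕ) + (y.2 : ℕ)) (hlt₁ : (x.1 : ℕ) < (y.1 : ℕ))
    (hdiag₂ : (r.1 : ℕ) + (r.2 : ℕ) = (s.1 : ℕ) + (s.2 : ℕ)) (hlt₂ : (r.1 : ℕ) < (s.1 : ℕ))
    (hdiag₃ : (t.1 : ℕ) + (t.2 : ℕ) = (z.1 : ℕ) + (z.2 : ℕ)) (hlt₃ : (t.1 : ℕ) < (z.1 : ℕ))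
    -- each pair has its elements at distance 2
    (hd₁ : (gridGraph ℓ ℓ).dist x y = 2)
    (hd₂ : (gridGraph ℓ ℓ).dist r s = 2)
    (hd₃ : (gridGraph ℓ ℓ).dist t z = 2)
    -- the three pairs lie in the same row, or all in the same column
    (hrowcol : (x.2 = r.2 ∧ y.2 = s.2 ∧ x.2 = t.2 ∧ y.2 = z.2) ∨
               (x.1 = r.1 ∧ y.1 = s.1 ∧ x.1 = t.1 ∧ y.1 = z.1))
    -- the pairs are `S`-unique with associated vertices `u`, `v`, `w`
    (huniq₁ : {p : Fin ℓ × Fin ℓ |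
        (gridGraph ℓ ℓ).dist p x ≠ (gridGraph ℓ ℓ).dist p y} ∩ S = {u})
    (huniq₂ : {p : Fin ℓ × Fin ℓ |
        (gridGraph ℓ ℓ).dist p r ≠ (gridGraph ℓ ℓ).dist p s} ∩ S = {v})
    (huniq₃ : {p : Fin ℓ × Fin ℓ |
        (gridGraph ℓ ℓ).dist p t ≠ (gridGraph ℓ ℓ).dist p z} ∩ S = {w})
    (huv : u ≠ v) (huw : u ≠ w) :
    v = w := by
  rw [gridGraph_resolvers_eq_xor_of_diagonal hdiag₁ hlt₁ hd₁] at huniq₁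
  rw [gridGraph_resolvers_eq_xor_of_diagonal hdiag₂ hlt₂ hd₂] at huniq₂
  rw [gridGraph_resolvers_eq_xor_of_diagonal hdiag₃ hlt₃ hd₃] at huniq₃
  rcases hrowcol with ⟨-, hs, -, hz⟩ | ⟨hr, -, ht, -⟩
  · rw [← hs] at huniq₂
    rw [← hz] at huniq₃
    exact eq_of_xor_le_inter_eq_singleton (·.1) (·.2 ≤ y.2) huniq₁ huniq₂ huniq₃ huv huw
  · rw [← hr] at huniq₂
    rw [← ht] at huniq₃
    simp only [xor_comm (_ ≤ x.1)] at huniq₁ huniq₂ huniq₃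
    exact eq_of_xor_le_inter_eq_singleton (·.2) (·.1 ≤ x.1) huniq₁ huniq₂ huniq₃ huv huw

/-- let `{x,y}`, `{r,s}`, `{t,z}` be pairwise distinct `S`-unique diagonal
pairs of the grid `G_ℓ`, each with elements at distance 2, lying in the same row
(resp. the same column), with associated vertices `u`, `v`, `w` respectively.
If `u ≠ v` and `u ≠ w`, then `v = w`. -/
theorem stmt12 (ℓ : ℕ) (hℓ : 2 ≤ ℓ) (S : Set (Fin ℓ × Fin ℓ))
    (hS : IsResolvingSet (gridGraph ℓ ℓ) S)
    (x y r s t z u v w : Fin ℓ × Fin ℓ)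
    -- the three diagonal pairs, each written with its smaller element first
    (hdiag₁ : (x.1 : ℕ) + (x.2 : ℕ) = (y.1 : ℕ) + (y.2 : ℕ)) (hlt₁ : (x.1 : ℕ) < (y.1 : ℕ))
    (hdiag₂ : (r.1 : ℕ) + (r.2 : ℕ) = (s.1 : ℕ) + (s.2 : ℕ)) (hlt₂ : (r.1 : ℕ) < (s.1 : ℕ))
    (hdiag₃ : (t.1 : ℕ) + (t.2 : ℕ) = (z.1 : ℕ) + (z.2 : ℕ)) (hlt₃ : (t.1 : ℕ) < (z.1 : ℕ))
    -- each pair has its elements at distance 2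
    (hd₁ : (gridGraph ℓ ℓ).dist x y = 2)
    (hd₂ : (gridGraph ℓ ℓ).dist r s = 2)
    (hd₃ : (gridGraph ℓ ℓ).dist t z = 2)
    -- the three pairs are pairwise distinct
    (hne₁₂ : ({x, y} : Finset (Fin ℓ × Fin ℓ)) ≠ {r, s})
    (hne₁₃ : ({x, y} : Finset (Fin ℓ × Fin ℓ)) ≠ {t, z})
    (hne₂₃ : ({r, s} : Finset (Fin ℓ × Fin ℓ)) ≠ {t, z})
    -- the three pairs lie in the same row, or all in the same column
    (hrowcol : (x.2 = r.2 ∧ y.2 = s.2 ∧ x.2 = t.2 ∧ y.2 = z.2) ∨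
               (x.1 = r.1 ∧ y.1 = s.1 ∧ x.1 = t.1 ∧ y.1 = z.1))
    -- the pairs are `S`-unique with associated vertices `u`, `v`, `w`
    (huniq₁ : {p : Fin ℓ × Fin ℓ |
        (gridGraph ℓ ℓ).dist p x ≠ (gridGraph ℓ ℓ).dist p y} ∩ S = {u})
    (huniq₂ : {p : Fin ℓ × Fin ℓ |
        (gridGraph ℓ ℓ).dist p r ≠ (gridGraph ℓ ℓ).dist p s} ∩ S = {v})
    (huniq₃ : {p : Fin ℓ × Fin ℓ |
        (gridGraph ℓ ℓ).dist p t ≠ (gridGraph ℓ ℓ).dist p z} ∩ S = {w})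
    (huv : u ≠ v) (huw : u ≠ w) :
    v = w :=
  stmt12_general ℓ S x y r s t z u v w hdiag₁ hlt₁ hdiag₂ hlt₂ hdiag₃ hlt₃ hd₁ hd₂ hd₃ hrowcol
    huniq₁ huniq₂ huniq₃ huv huw
end
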